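/- arXiv:1911.01696 — 2 statements merged into one kernel-verified Lean document; each statement's English description precedes it below -/
import Mathlib

section
/- Generalized Matveev–Trautman criterion for Weyl compatibility (pointwise form): let n ≥ 1, g a symmetric invertible real n×n matrix, φ : Fin n → ℝ a covector, and A, B : Fin n → Fin n → Fin n → ℝ arrays symmetric in their lower indices (A plays the role of the Levi-Civita connection of g, B of a representative of a projective structure). Define T^i_{jk} = Π(A − B)^i_{jk} and the generalized Matveev symbol T̃^i_{jk} = T^i_{jk} + (n+1)⁻¹ (δ^i_j φ_k + δ^i_k φ_j) − g_{jk} φ^i, with φ^i = Σ_α (g⁻¹)^{iα} φ_α. Then the Weyl connection array A + Γ(φ) is projectively equivalent to B — i.e. there exists ψ : Fin n → ℝ with A^i_{jk} + Γ(φ)^i_{jk} − B^i_{jk} = δ^i_j ψ_k + δ^i_k ψ_j for all i, j, k — if and only if T̃^i_{jk} = 0 for all i, j, k. -/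
/-!
Write `D := A + Γ(φ) − B`. The Thomas symbol is linear and its kernel consists exactly of the
projective changes `δ^i_j ψ_k + δ^i_k ψ_j`, since `Π(D) = D − (δ^i_j ψ_k + δ^i_k ψ_j)` with
`ψ_k = (n+1)⁻¹ Σ_l D^l_{lk}`. So Weyl compatibility means `Π(A − B) + Π(Γ(φ)) = 0`. For
symmetric invertible `g` one has `Σ_l g_{lk} φ^l = φ_k`, hence the trace `Σ_l Γ(φ)^l_{lk} = n φ_k`
and `Π(Γ(φ)) = (n+1)⁻¹ (δ^i_j φ_k + δ^i_k φ_j) − g_{jk} φ^i`.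
-/

open scoped BigOperators
open Matrix

noncomputable section

def kron {n : ℕ} (i j : Fin n) : ℝ := if i = j then 1 else 0

/-- Scale-connection term Γ(φ)^μ_{νλ} = δ^μ_ν φ_λ + δ^μ_λ φ_ν − g_{νλ} φ^μ,
with φ^μ = Σ_α (g⁻¹)^{μα} φ_α. -/
def scaleConnTerm {n : ℕ} (g : Matrix (Fin n) (Fin n) ℝ) (φ : Fin n → ℝ)
    (μ ν l : Fin n) : ℝ :=
  kron μ ν * φ l + kron μ l * φ ν - g ν l * ∑ α, g⁻¹ μ α * φ α

/-- Thomas symbol Π(D)^i_{jk}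
  = D^i_{jk} − (n+1)⁻¹ (δ^i_j Σ_l D^l_{lk} + δ^i_k Σ_l D^l_{lj}). -/
def thomasSymbol {n : ℕ} (D : Fin n → Fin n → Fin n → ℝ) (i j k : Fin n) : ℝ :=
  D i j k - ((n : ℝ) + 1)⁻¹ *
    (kron i j * (∑ l, D l l k) + kron i k * (∑ l, D l l j))

section ThomasSymbol

variable {n : ℕ}

theorem sum_kron_mul (f : Fin n → ℝ) (k : Fin n) : ∑ l, kron l k * f l = f k := by
  simp [kron]

theorem sum_kron_self : ∑ l : Fin n, kron l l = n := by
  simp [kron]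

theorem thomasSymbol_add (D E : Fin n → Fin n → Fin n → ℝ) (i j k : Fin n) :
    thomasSymbol (fun a b c => D a b c + E a b c) i j k
      = thomasSymbol D i j k + thomasSymbol E i j k := by
  simp only [thomasSymbol, Finset.sum_add_distrib]
  ring

theorem thomasSymbol_eq_sub (D : Fin n → Fin n → Fin n → ℝ) (i j k : Fin n) :
    thomasSymbol D i j k
      = D i j k - (kron i j * (((n : ℝ) + 1)⁻¹ * ∑ l, D l l k)
          + kron i k * (((n : ℝ) + 1)⁻¹ * ∑ l, D l l j)) := by
  rw [thomasSymbol]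
  ring

theorem sum_projChange (ψ : Fin n → ℝ) (k : Fin n) :
    ∑ l, (kron l l * ψ k + kron l k * ψ l) = ((n : ℝ) + 1) * ψ k := by
  rw [Finset.sum_add_distrib, ← Finset.sum_mul, sum_kron_self, sum_kron_mul]
  ring

theorem thomasSymbol_eq_zero_iff_exists (D : Fin n → Fin n → Fin n → ℝ) :
    (∀ i j k, thomasSymbol D i j k = 0)
      ↔ ∃ ψ : Fin n → ℝ, ∀ i j k, D i j k = kron i j * ψ k + kron i k * ψ j := by
  constructor
  · intro hD
    exact ⟨fun k => ((n : ℝ) + 1)⁻¹ * ∑ l, D l l k, fun i j k => by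
      linarith [thomasSymbol_eq_sub D i j k, hD i j k]⟩
  · rintro ⟨ψ, hψ⟩ i j k
    have htrace : ∀ k, ((n : ℝ) + 1)⁻¹ * ∑ l, D l l k = ψ k := fun k => by
      simp only [hψ, sum_projChange]
      field_simp
    rw [thomasSymbol_eq_sub, htrace, htrace, hψ, sub_self]

end ThomasSymbol

section ScaleConnection

variable {n : ℕ} {g : Matrix (Fin n) (Fin n) ℝ}

theorem sum_mul_raiseIndex (hsym : gᵀ = g) (hinv : IsUnit g) (φ : Fin n → ℝ) (k : Fin n) :
    ∑ l, g l k * ∑ α, g⁻¹ l α * φ α = φ k := by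
  have hdet : IsUnit g.det := (isUnit_iff_isUnit_det g).mp hinv
  calc ∑ l, g l k * ∑ α, g⁻¹ l α * φ α = (gᵀ *ᵥ (g⁻¹ *ᵥ φ)) k := by
        simp only [mulVec, dotProduct, transpose_apply]
    _ = φ k := by rw [hsym, mulVec_mulVec, mul_nonsing_inv g hdet, one_mulVec]

theorem sum_scaleConnTerm (hsym : gᵀ = g) (hinv : IsUnit g) (φ : Fin n → ℝ) (k : Fin n) :
    ∑ l, scaleConnTerm g φ l l k = n * φ k := by
  simp only [scaleConnTerm, Finset.sum_sub_distrib, Finset.sum_add_distrib, ← Finset.sum_mul,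
    sum_kron_self, sum_kron_mul, sum_mul_raiseIndex hsym hinv]
  ring

theorem thomasSymbol_scaleConnTerm (hsym : gᵀ = g) (hinv : IsUnit g) (φ : Fin n → ℝ)
    (i j k : Fin n) :
    thomasSymbol (scaleConnTerm g φ) i j k
      = ((n : ℝ) + 1)⁻¹ * (kron i j * φ k + kron i k * φ j)
          - g j k * ∑ α, g⁻¹ i α * φ α := by
  rw [thomasSymbol, sum_scaleConnTerm hsym hinv, sum_scaleConnTerm hsym hinv, scaleConnTerm]
  field_simp
  ring

end ScaleConnection

theorem weyl_compatibility_iff_matveev_symbol_vanishes_general (n : ℕ)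
    (g : Matrix (Fin n) (Fin n) ℝ) (hsym : gᵀ = g) (hinv : IsUnit g)
    (φ : Fin n → ℝ)
    (A B : Fin n → Fin n → Fin n → ℝ) :
    (∃ ψ : Fin n → ℝ, ∀ i j k : Fin n,
        A i j k + scaleConnTerm g φ i j k - B i j k
          = kron i j * ψ k + kron i k * ψ j)
      ↔ (∀ i j k : Fin n,
          thomasSymbol (fun a b c => A a b c - B a b c) i j k
            + ((n : ℝ) + 1)⁻¹ * (kron i j * φ k + kron i k * φ j)
            - g j k * (∑ α, g⁻¹ i α * φ α) = 0) := by
  rw [← thomasSymbol_eq_zero_iff_exists]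
  refine forall₃_congr fun i j k => ?_
  have hsplit : (fun a b c => A a b c + scaleConnTerm g φ a b c - B a b c)
      = fun a b c => (A a b c - B a b c) + scaleConnTerm g φ a b c := by
    simp only [add_sub_right_comm]
  rw [hsplit, thomasSymbol_add, thomasSymbol_scaleConnTerm hsym hinv, add_sub_assoc]

/-- Generalized Matveev–Trautman criterion for Weyl compatibility (pointwise
form): the Weyl connection array A + Γ(φ) is projectively equivalent to B iff
the generalized Matveev symbol T̃ vanishes, where
T̃^i_{jk} = Π(A−B)^i_{jk} + (n+1)⁻¹ (δ^i_j φ_k + δ^i_k φ_j) − g_{jk} φ^i. -/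
theorem weyl_compatibility_iff_matveev_symbol_vanishes (n : ℕ) (hn : 1 ≤ n)
    (g : Matrix (Fin n) (Fin n) ℝ) (hsym : gᵀ = g) (hinv : IsUnit g)
    (φ : Fin n → ℝ)
    (A B : Fin n → Fin n → Fin n → ℝ)
    (hAsym : ∀ i j k : Fin n, A i j k = A i k j)
    (hBsym : ∀ i j k : Fin n, B i j k = B i k j) :
    (∃ ψ : Fin n → ℝ, ∀ i j k : Fin n,
        A i j k + scaleConnTerm g φ i j k - B i j k
          = kron i j * ψ k + kron i k * ψ j)
      ↔ (∀ i j k : Fin n,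
          thomasSymbol (fun a b c => A a b c - B a b c) i j k
            + ((n : ℝ) + 1)⁻¹ * (kron i j * φ k + kron i k * φ j)
            - g j k * (∑ α, g⁻¹ i α * φ α) = 0) :=
  weyl_compatibility_iff_matveev_symbol_vanishes_general n g hsym hinv φ A B
end
end

section
/- Scale invariance of the Weylian length of a curve: let U ⊆ ℝⁿ be open, g : U → Matrix (Fin n) (Fin n) ℝ continuous, φ a 1-form on U with continuous components, Ω : U → ℝ positive and continuously differentiable, and γ : ℝ → ℝⁿ continuously differentiable on [τ₀, τ₁] with γ([τ₀, τ₁]) ⊆ U. Set g̃ = Ω² g and φ̃_ν = φ_ν − Ω⁻¹ ∂_ν Ω. Then ∫_{τ₀}^{τ₁} exp(2 ∫_{τ₀}^{t} Σ_ν φ̃_ν(γ(s)) γ̇^ν(s) ds) · Σ_{μ,ν} g̃_{μν}(γ(t)) γ̇^μ(t) γ̇^ν(t) dt = Ω(γ(τ₀))² · ∫_{τ₀}^{τ₁} exp(2 ∫_{τ₀}^{t} Σ_ν φ_ν(γ(s)) γ̇^ν(s) ds) · Σ_{μ,ν} g_{μν}(γ(t)) γ̇^μ(t) γ̇^ν(t)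 dt; i.e. the squared Weylian curve length l_W²(γ) = ∫ e^{2∫φ(γ̇)} g(γ̇, γ̇) dτ is invariant under gauge transformations up to the constant factor Ω(γ(τ₀))² depending only on the initial point. -/
/-!
Along `γ`, the gauge term `Ω⁻¹ ∂_ν Ω γ̇^ν` is the derivative of `log Ω(γ(s))`, so the exponent
of the transformed integrand at time `t` drops by `2 (log Ω(γ t) - log Ω(γ τ₀))`. The resulting
factor `Ω(γ τ₀)² / Ω(γ t)²` cancels the `Ω(γ t)²` of the rescaled metric pointwise in `t`.
-/

open scoped BigOperators
open intervalIntegral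

noncomputable section

/-- Euclidean space ℝⁿ. -/
abbrev Euc (n : ℕ) := EuclideanSpace ℝ (Fin n)

/-- Partial derivative of `h` at `x` in the `μ`-th coordinate direction. -/
def pd {n : ℕ} (h : Euc n → ℝ) (μ : Fin n) (x : Euc n) : ℝ :=
  fderiv ℝ h x (EuclideanSpace.single μ 1)

open Set Topology

variable {n : ℕ}

theorem fderiv_apply_eq_sum_pd (f : Euc n → ℝ) (x w : Euc n) :
    fderiv ℝ f x w = ∑ ν, pd f ν x * w ν := by
  conv_lhs => rw [← (EuclideanSpace.basisFun (Fin n) ℝ).sum_repr w]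
  simp [pd, mul_comm]

theorem pd_log {f : Euc n → ℝ} {x : Euc n} (hf : DifferentiableAt ℝ f x) (hx : f x ≠ 0)
    (ν : Fin n) : pd (fun y => Real.log (f y)) ν x = (f x)⁻¹ * pd f ν x := by
  simp [pd, fderiv.log hf hx]

theorem HasDerivAt.apply_coord {γ : ℝ → Euc n} {v : Euc n} {s : ℝ} (h : HasDerivAt γ v s)
    (ν : Fin n) : HasDerivAt (fun r => γ r ν) (v ν) s :=
  (EuclideanSpace.proj (𝕜 := ℝ) ν).hasFDerivAt.comp_hasDerivAt s h

theorem hasDerivAt_comp_eq_sum_pd {f : Euc n → ℝ} {γ : ℝ → Euc n} {s : ℝ}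
    (hf : DifferentiableAt ℝ f (γ s)) (hγ : DifferentiableAt ℝ γ s) :
    HasDerivAt (fun r => f (γ r)) (∑ ν, pd f ν (γ s) * deriv (fun r => γ r ν) s) s := by
  have hcoord (ν : Fin n) : deriv (fun r => γ r ν) s = deriv γ s ν :=
    (hγ.hasDerivAt.apply_coord ν).deriv
  simp only [hcoord, ← fderiv_apply_eq_sum_pd]
  exact hf.hasFDerivAt.comp_hasDerivAt s hγ.hasDerivAt

theorem ContDiffOn.continuousOn_pd {U : Set (Euc n)} {f : Euc n → ℝ} (hf : ContDiffOn ℝ 1 f U)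
    (hU : IsOpen U) (ν : Fin n) : ContinuousOn (pd f ν) U :=
  (hf.continuousOn_fderiv_of_isOpen hU le_rfl).clm_apply continuousOn_const

def lineIntegral (ω : Fin n → Euc n → ℝ) (γ : ℝ → Euc n) (a b : ℝ) : ℝ :=
  ∫ s in a..b, ∑ ν, ω ν (γ s) * deriv (fun r => γ r ν) s

section LineIntegral

variable {U : Set (Euc n)} {ω η : Fin n → Euc n → ℝ} {γ : ℝ → Euc n} {a b : ℝ}

theorem intervalIntegrable_lineIntegrand (hab : a ≤ b) (hω : ∀ ν, ContinuousOn (ω ν) U)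
    (hγ : ContDiffOn ℝ 1 γ (Icc a b)) (hγU : MapsTo γ (Icc a b) U) :
    IntervalIntegrable (fun s => ∑ ν, ω ν (γ s) * deriv (fun r => γ r ν) s)
      MeasureTheory.volume a b := by
  rcases hab.eq_or_lt with rfl | hlt
  · exact IntervalIntegrable.refl
  have hv : ContinuousOn (derivWithin γ (Icc a b)) (Icc a b) :=
    hγ.continuousOn_derivWithin (uniqueDiffOn_Icc hlt) le_rfl
  have hcont : ContinuousOn (fun s => ∑ ν, ω ν (γ s) * derivWithin γ (Icc a b) s ν) (Icc a b) :=
    continuousOn_finsetSum _ fun ν _ => ((hω ν).comp hγ.continuousOn hγU).mul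
      ((EuclideanSpace.proj (𝕜 := ℝ) ν).continuous.comp_continuousOn hv)
  have hderiv (s : ℝ) (hs : s ∈ Ioo a b) (ν : Fin n) :
      derivWithin γ (Icc a b) s ν = deriv (fun r => γ r ν) s := by
    have hmem : Icc a b ∈ 𝓝 s := Icc_mem_nhds hs.1 hs.2
    have hγs := ((hγ.differentiableOn one_ne_zero s (Ioo_subset_Icc_self hs)).differentiableAt
      hmem).hasDerivAt
    rw [derivWithin_of_mem_nhds hmem, (hγs.apply_coord ν).deriv]
  rw [intervalIntegrable_iff_integrableOn_Ioo_of_le hab]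
  refine (hcont.integrableOn_Icc.mono_set Ioo_subset_Icc_self).congr_fun
    (fun s hs => Finset.sum_congr rfl fun ν _ => by rw [hderiv s hs ν]) measurableSet_Ioo

theorem lineIntegral_sub (hab : a ≤ b) (hω : ∀ ν, ContinuousOn (ω ν) U)
    (hη : ∀ ν, ContinuousOn (η ν) U) (hγ : ContDiffOn ℝ 1 γ (Icc a b))
    (hγU : MapsTo γ (Icc a b) U) :
    lineIntegral (fun ν x => ω ν x - η ν x) γ a b =
      lineIntegral ω γ a b - lineIntegral η γ a b := by
  rw [lineIntegral, lineIntegral, lineIntegral,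
    ← integral_sub (intervalIntegrable_lineIntegrand hab hω hγ hγU)
      (intervalIntegrable_lineIntegrand hab hη hγ hγU)]
  simp only [sub_mul, Finset.sum_sub_distrib]

theorem lineIntegral_congr (hab : a ≤ b) (h : ∀ x ∈ U, ∀ ν, ω ν x = η ν x)
    (hγU : MapsTo γ (Icc a b) U) : lineIntegral ω γ a b = lineIntegral η γ a b := by
  refine integral_congr fun s hs => ?_
  rw [uIcc_of_le hab] at hs
  simp only [h _ (hγU hs)]

theorem lineIntegral_pd_eq_sub {f : Euc n → ℝ} (hU : IsOpen U) (hf : ContDiffOn ℝ 1 f U)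
    (hab : a ≤ b) (hγ : ContDiffOn ℝ 1 γ (Icc a b)) (hγU : MapsTo γ (Icc a b) U) :
    lineIntegral (pd f) γ a b = f (γ b) - f (γ a) := by
  refine integral_eq_sub_of_hasDerivAt_of_le hab (hf.continuousOn.comp hγ.continuousOn hγU)
    (fun s hs => ?_) (intervalIntegrable_lineIntegrand hab (hf.continuousOn_pd hU) hγ hγU)
  have hsI : s ∈ Icc a b := Ioo_subset_Icc_self hs
  exact hasDerivAt_comp_eq_sum_pd
    ((hf.differentiableOn one_ne_zero _ (hγU hsI)).differentiableAt (hU.mem_nhds (hγU hsI)))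
    ((hγ.differentiableOn one_ne_zero s hsI).differentiableAt (Icc_mem_nhds hs.1 hs.2))

end LineIntegral

def gaugeForm (Ω : Euc n → ℝ) (φ : Fin n → Euc n → ℝ) : Fin n → Euc n → ℝ :=
  fun ν x => φ ν x - (Ω x)⁻¹ * pd Ω ν x

def weylLengthSq (g : Euc n → Matrix (Fin n) (Fin n) ℝ) (φ : Fin n → Euc n → ℝ)
    (γ : ℝ → Euc n) (a b : ℝ) : ℝ :=
  ∫ t in a..b, Real.exp (2 * lineIntegral φ γ a t) *
    ∑ μ, ∑ ν, g (γ t) μ ν * deriv (fun r => γ r μ) t * deriv (fun r => γ r ν) t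

section Gauge

variable {U : Set (Euc n)} {φ : Fin n → Euc n → ℝ} {Ω : Euc n → ℝ} {γ : ℝ → Euc n} {a b : ℝ}

/-- `dΩ/Ω = d(log Ω)` is exact, so its line integral only sees the endpoints. -/
theorem lineIntegral_gaugeForm (hU : IsOpen U) (hφ : ∀ ν, ContinuousOn (φ ν) U)
    (hΩpos : ∀ x ∈ U, 0 < Ω x) (hΩ : ContDiffOn ℝ 1 Ω U) (hab : a ≤ b)
    (hγ : ContDiffOn ℝ 1 γ (Icc a b)) (hγU : MapsTo γ (Icc a b) U) :
    lineIntegral (gaugeForm Ω φ) γ a b =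
      lineIntegral φ γ a b - (Real.log (Ω (γ b)) - Real.log (Ω (γ a))) := by
  have hlogΩ : ContDiffOn ℝ 1 (fun x => Real.log (Ω x)) U :=
    hΩ.log fun x hx => (hΩpos x hx).ne'
  have hdlog (x : Euc n) (hx : x ∈ U) (ν : Fin n) :
      gaugeForm Ω φ ν x = φ ν x - pd (fun y => Real.log (Ω y)) ν x := by
    rw [gaugeForm, pd_log ((hΩ.differentiableOn one_ne_zero x hx).differentiableAt
      (hU.mem_nhds hx)) (hΩpos x hx).ne']
  rw [lineIntegral_congr hab hdlog hγU, lineIntegral_sub hab hφ (hlogΩ.continuousOn_pd hU) hγ hγU,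
    lineIntegral_pd_eq_sub hU hlogΩ hab hγ hγU]

theorem exp_two_mul_sub_log_sub_log (c : ℝ) {x y : ℝ} (hx : 0 < x) (hy : 0 < y) :
    Real.exp (2 * (c - (Real.log x - Real.log y))) = y ^ 2 / x ^ 2 * Real.exp (2 * c) := by
  rw [show 2 * (c - (Real.log x - Real.log y)) = Real.log (y ^ 2) - Real.log (x ^ 2) + 2 * c by
    rw [Real.log_pow, Real.log_pow]; push_cast; ring, Real.exp_add, Real.exp_sub,
    Real.exp_log (by positivity), Real.exp_log (by positivity)]

theorem weylLengthSq_gauge (g : Euc n → Matrix (Fin n) (Fin n) ℝ) (hU : IsOpen U)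
    (hφ : ∀ ν, ContinuousOn (φ ν) U) (hΩpos : ∀ x ∈ U, 0 < Ω x) (hΩ : ContDiffOn ℝ 1 Ω U)
    (hab : a ≤ b) (hγ : ContDiffOn ℝ 1 γ (Icc a b)) (hγU : MapsTo γ (Icc a b) U) :
    weylLengthSq (fun x => Ω x ^ 2 • g x) (gaugeForm Ω φ) γ a b =
      Ω (γ a) ^ 2 * weylLengthSq g φ γ a b := by
  rw [weylLengthSq, weylLengthSq, ← integral_const_mul]
  refine integral_congr fun t ht => ?_
  rw [uIcc_of_le hab] at ht
  have hsub : Icc a t ⊆ Icc a b := Icc_subset_Icc_right ht.2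
  have hΩt : 0 < Ω (γ t) := hΩpos _ (hγU ht)
  rw [lineIntegral_gaugeForm hU hφ hΩpos hΩ ht.1 (hγ.mono hsub) (hγU.mono_left hsub),
    exp_two_mul_sub_log_sub_log _ hΩt (hΩpos _ (hγU (left_mem_Icc.2 hab)))]
  simp only [Matrix.smul_apply, smul_eq_mul, mul_assoc, ← Finset.mul_sum]
  field_simp

end Gauge

theorem weylian_length_scale_invariant_general (n : ℕ)
    (U : Set (Euc n)) (hU : IsOpen U)
    (g : Euc n → Matrix (Fin n) (Fin n) ℝ)
    (φ : Fin n → Euc n → ℝ) (hφcont : ∀ ν : Fin n, ContinuousOn (φ ν) U)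
    (Ω : Euc n → ℝ) (hΩpos : ∀ y ∈ U, 0 < Ω y) (hΩ : ContDiffOn ℝ 1 Ω U)
    (τ₀ τ₁ : ℝ) (hτ : τ₀ ≤ τ₁) (γ : ℝ → Euc n)
    (hγ : ContDiffOn ℝ 1 γ (Set.Icc τ₀ τ₁))
    (hγU : ∀ t ∈ Set.Icc τ₀ τ₁, γ t ∈ U) :
    (∫ t in τ₀..τ₁,
        Real.exp (2 * ∫ s in τ₀..t, ∑ ν,
            (φ ν (γ s) - (Ω (γ s))⁻¹ * pd Ω ν (γ s))
              * deriv (fun r => γ r ν) s) *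
          ∑ μ, ∑ ν, (Ω (γ t)) ^ 2 * g (γ t) μ ν
            * deriv (fun r => γ r μ) t * deriv (fun r => γ r ν) t)
      = (Ω (γ τ₀)) ^ 2 *
        ∫ t in τ₀..τ₁,
          Real.exp (2 * ∫ s in τ₀..t, ∑ ν,
              φ ν (γ s) * deriv (fun r => γ r ν) s) *
            ∑ μ, ∑ ν, g (γ t) μ ν
              * deriv (fun r => γ r μ) t * deriv (fun r => γ r ν) t :=
  -- the two sides unfold definitionally to `weylLengthSq` of the gauges `(Ω² g, gaugeForm Ω φ)`
  -- and `(g, φ)`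
  weylLengthSq_gauge g hU hφcont hΩpos hΩ hτ hγ hγU

/-- Scale invariance of the (squared) Weylian length of a curve:
l_W²(γ) = ∫ e^{2∫φ(γ̇)} g(γ̇,γ̇) dτ changes under a gauge transformation by
Ω only by the constant factor Ω(γ(τ₀))². -/
theorem weylian_length_scale_invariant (n : ℕ)
    (U : Set (Euc n)) (hU : IsOpen U)
    (g : Euc n → Matrix (Fin n) (Fin n) ℝ)
    (hgcont : ∀ μ ν : Fin n, ContinuousOn (fun y => g y μ ν) U)
    (φ : Fin n → Euc n → ℝ) (hφcont : ∀ ν : Fin n, ContinuousOn (φ ν) U)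
    (Ω : Euc n → ℝ) (hΩpos : ∀ y ∈ U, 0 < Ω y) (hΩ : ContDiffOn ℝ 1 Ω U)
    (τ₀ τ₁ : ℝ) (hτ : τ₀ ≤ τ₁) (γ : ℝ → Euc n)
    (hγ : ContDiffOn ℝ 1 γ (Set.Icc τ₀ τ₁))
    (hγU : ∀ t ∈ Set.Icc τ₀ τ₁, γ t ∈ U) :
    (∫ t in τ₀..τ₁,
        Real.exp (2 * ∫ s in τ₀..t, ∑ ν,
            (φ ν (γ s) - (Ω (γ s))⁻¹ * pd Ω ν (γ s))
              * deriv (fun r => γ r ν) s) *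
          ∑ μ, ∑ ν, (Ω (γ t)) ^ 2 * g (γ t) μ ν
            * deriv (fun r => γ r μ) t * deriv (fun r => γ r ν) t)
      = (Ω (γ τ₀)) ^ 2 *
        ∫ t in τ₀..τ₁,
          Real.exp (2 * ∫ s in τ₀..t, ∑ ν,
              φ ν (γ s) * deriv (fun r => γ r ν) s) *
            ∑ μ, ∑ ν, g (γ t) μ ν
              * deriv (fun r => γ r μ) t * deriv (fun r => γ r ν) t :=
  weylian_length_scale_invariant_general n U hU g φ hφcont Ω hΩpos hΩ τ₀ τ₁ hτ γ hγ hγU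
end
end
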